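/- arXiv:1902.02570 — 2 statements merged into one kernel-verified Lean document; each statement's English description precedes it below -/
import Mathlib

section
/- With ω = D-1 and a_A^{(j)} the Behrends-Fronsdal coefficients, for 1 ≤ A ≤ ⌊j/2⌋ the combination B_A := a_A^{(j-1)} - (2A/(ω+2(j-2)))·a_A^{(j-1)} - ((j-2A+1)/(ω+2(j-2)))·a_{A-1}^{(j-1)} equals a_A^{(j)}. -/
open Finset

/-- The Behrends–Fronsdal coefficients `a_A^{(n)}` (explicit form), set to `0` outside
`0 ≤ A ≤ ⌊n/2⌋`. -/
noncomputable def a (D n A : ℕ) : ℚ :=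
  if A ≤ n / 2 then
    (-(1 / 2) : ℚ) ^ A * (n.factorial : ℚ) /
      (((n - 2 * A).factorial : ℚ) * (A.factorial : ℚ) *
        ∏ i ∈ range A, (2 * (n : ℚ) + (D : ℚ) - 5 - 2 * (i : ℚ)))
  else 0

lemma a_of_le (D n A : ℕ) (h : A ≤ n / 2) :
    a D n A =
      (-(1 / 2) : ℚ) ^ A * (n.factorial : ℚ) /
        (((n - 2 * A).factorial : ℚ) * (A.factorial : ℚ) *
          ∏ i ∈ range A, (2 * (n : ℚ) + (D : ℚ) - 5 - 2 * (i : ℚ))) := by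
  rw [a, if_pos h]

lemma a_of_gt (D n A : ℕ) (h : n / 2 < A) : a D n A = 0 := by
  rw [a, if_neg (by omega)]

lemma prod_pos' (D n A : ℕ) (hD : 4 ≤ D) (hA : A ≤ n) :
    0 < ∏ i ∈ range A, (2 * (n : ℚ) + (D : ℚ) - 5 - 2 * (i : ℚ)) := by
  apply Finset.prod_pos
  intro i hi
  simp only [mem_range] at hi
  have h1 : (i : ℚ) + 1 ≤ (n : ℚ) := by
    exact_mod_cast Nat.succ_le_of_lt (lt_of_lt_of_le hi hA)
  have h2 : (4 : ℚ) ≤ (D : ℚ) := by exact_mod_cast hD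
  linarith

lemma prod_peel_first (x : ℚ) (B : ℕ) :
    ∏ i ∈ range (B + 1), (x - 2 * (i : ℚ)) =
      x * ∏ i ∈ range B, (x - 2 - 2 * (i : ℚ)) := by
  rw [Finset.prod_range_succ', Nat.cast_zero, mul_zero, sub_zero, mul_comm]
  congr 1
  apply Finset.prod_congr rfl
  intro i _
  push_cast
  ring

lemma key2 (b f g q x K : ℚ) (hq : q ≠ 0) (hf : f ≠ 0) (hb : b + 1 ≠ 0) (hK : K ≠ 0) :
    0 - 2 * (b + 1) / K * 0 - (2 * b + 2 - 2 * (b + 1) + 1) / K * (x * g / (1 * f * q)) =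
      x * -(1 / 2) * ((2 * b + 2) * g) / (1 * ((b + 1) * f) * (K * q)) := by
  field_simp
  ring

set_option maxHeartbeats 1000000 in
lemma key3 (b r f fr g q x K : ℚ) (hq : q ≠ 0) (hf : f ≠ 0) (hfr : fr ≠ 0)
    (hb : b + 1 ≠ 0) (hr1 : r + 1 ≠ 0) (hr2 : r + 2 ≠ 0) (hK : K ≠ 0)
    (hX2 : K - 2 * (b + 1) ≠ 0) :
    x * -(1 / 2) * g / (fr * ((b + 1) * f) * (q * (K - 2 * (b + 1)))) -
        2 * (b + 1) / K *
          (x * -(1 / 2) * g / (fr * ((b + 1) * f) * (q * (K - 2 * (b + 1))))) -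
        (2 * b + r + 3 - 2 * (b + 1) + 1) / K *
          (x * g / ((r + 2) * (r + 1) * fr * f * q)) =
      x * -(1 / 2) * ((2 * b + r + 3) * g) /
        ((r + 1) * fr * ((b + 1) * f) * (K * q)) := by
  field_simp
  ring

set_option maxHeartbeats 2000000 in
/-- `B_A := a_A^{(j-1)} - (2A/(ω+2(j-2))) a_A^{(j-1)} - ((j-2A+1)/(ω+2(j-2))) a_{A-1}^{(j-1)}`
equals `a_A^{(j)}`, where `ω = D-1`. -/
theorem BF_B_eq_a (j D : ℕ) (hj : 2 ≤ j) (hD : 4 ≤ D) (A : ℕ) (hA1 : 1 ≤ A)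
    (hA2 : A ≤ j / 2) :
    a D (j - 1) A - (2 * (A : ℚ) / (((D : ℚ) - 1) + 2 * ((j : ℚ) - 2))) * a D (j - 1) A -
        (((j : ℚ) - 2 * A + 1) / (((D : ℚ) - 1) + 2 * ((j : ℚ) - 2))) * a D (j - 1) (A - 1) =
      a D j A := by
  obtain ⟨B, rfl⟩ : ∃ B, A = B + 1 := ⟨A - 1, by omega⟩
  have h2A : 2 * (B + 1) ≤ j := by omega
  have hD4 : (4 : ℚ) ≤ (D : ℚ) := by exact_mod_cast hD
  rcases eq_or_lt_of_le h2A with hcase | hcase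
  · -- j = 2B + 2
    obtain rfl : j = 2 * B + 2 := by omega
    rw [a_of_gt D (2 * B + 2 - 1) (B + 1) (by omega)]
    simp only [show 2 * B + 2 - 1 = 2 * B + 1 from by omega,
      show B + 1 - 1 = B from rfl]
    rw [a_of_le D (2 * B + 1) B (by omega), a_of_le D (2 * B + 2) (B + 1) (by omega)]
    simp only [show 2 * B + 1 - 2 * B = 1 from by omega,
      show 2 * B + 2 - 2 * (B + 1) = 0 from by omega]
    have hqpos : 0 < ∏ i ∈ range B, (2 * ((2 * B + 1 : ℕ) : ℚ) + (D : ℚ) - 5 - 2 * (i : ℚ)) :=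
      prod_pos' D (2 * B + 1) B hD (by omega)
    rw [prod_peel_first]
    rw [show (∏ i ∈ range B, (2 * ((2 * B + 2 : ℕ) : ℚ) + (D : ℚ) - 5 - 2 - 2 * (i : ℚ)))
        = ∏ i ∈ range B, (2 * ((2 * B + 1 : ℕ) : ℚ) + (D : ℚ) - 5 - 2 * (i : ℚ)) from
      Finset.prod_congr rfl fun i _ => by push_cast; ring]
    set q := ∏ i ∈ range B, (2 * ((2 * B + 1 : ℕ) : ℚ) + (D : ℚ) - 5 - 2 * (i : ℚ)) with hqdef
    have hf1 : (((2 * B + 2).factorial : ℕ) : ℚ) = (2 * (B : ℚ) + 2) * ((2 * B + 1).factorial : ℚ) := by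
      rw [show 2 * B + 2 = (2 * B + 1) + 1 from by ring, Nat.factorial_succ]; push_cast; ring
    have hf2 : (((B + 1).factorial : ℕ) : ℚ) = ((B : ℚ) + 1) * (B.factorial : ℚ) := by
      rw [Nat.factorial_succ]; push_cast; ring
    rw [hf1, hf2]
    simp only [Nat.factorial_zero, Nat.factorial_one, Nat.cast_one]
    have hq : q ≠ 0 := ne_of_gt hqpos
    have hB1 : ((B : ℚ) + 1) ≠ 0 := by positivity
    have hfB : (B.factorial : ℚ) ≠ 0 := Nat.cast_ne_zero.mpr (Nat.factorial_ne_zero _)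
    have hB0 : (0 : ℚ) ≤ (B : ℚ) := Nat.cast_nonneg B
    have hK : (2 * ((2 * B + 2 : ℕ) : ℚ) + (D : ℚ) - 5) ≠ 0 := by push_cast; linarith
    rw [show ((D : ℚ) - 1) + 2 * (((2 * B + 2 : ℕ) : ℚ) - 2)
        = 2 * ((2 * B + 2 : ℕ) : ℚ) + (D : ℚ) - 5 from by push_cast; ring]
    rw [pow_succ]
    have hkey := key2 (B : ℚ) (B.factorial : ℚ) ((2 * B + 1).factorial : ℚ) q
      ((-(1 / 2) : ℚ) ^ B) (2 * ((2 * B + 2 : ℕ) : ℚ) + (D : ℚ) - 5) hq hfB hB1 hK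
    push_cast at hkey ⊢
    linear_combination hkey
  · -- j ≥ 2B + 3
    obtain ⟨r, rfl⟩ : ∃ r, j = 2 * B + r + 3 := ⟨j - (2 * B + 3), by omega⟩
    simp only [show 2 * B + r + 3 - 1 = 2 * B + r + 2 from by omega,
      show B + 1 - 1 = B from rfl]
    rw [a_of_le D (2 * B + r + 2) (B + 1) (by omega),
      a_of_le D (2 * B + r + 2) B (by omega),
      a_of_le D (2 * B + r + 3) (B + 1) (by omega)]
    simp only [show 2 * B + r + 2 - 2 * (B + 1) = r from by omega,
      show 2 * B + r + 2 - 2 * B = r + 2 from by omega,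
      show 2 * B + r + 3 - 2 * (B + 1) = r + 1 from by omega]
    have hqpos : 0 < ∏ i ∈ range B, (2 * ((2 * B + r + 2 : ℕ) : ℚ) + (D : ℚ) - 5 - 2 * (i : ℚ)) :=
      prod_pos' D (2 * B + r + 2) B hD (by omega)
    rw [Finset.prod_range_succ, prod_peel_first]
    rw [show (∏ i ∈ range B, (2 * ((2 * B + r + 3 : ℕ) : ℚ) + (D : ℚ) - 5 - 2 - 2 * (i : ℚ)))
        = ∏ i ∈ range B, (2 * ((2 * B + r + 2 : ℕ) : ℚ) + (D : ℚ) - 5 - 2 * (i : ℚ)) from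
      Finset.prod_congr rfl fun i _ => by push_cast; ring]
    set q := ∏ i ∈ range B, (2 * ((2 * B + r + 2 : ℕ) : ℚ) + (D : ℚ) - 5 - 2 * (i : ℚ)) with hqdef
    have hf1 : (((2 * B + r + 3).factorial : ℕ) : ℚ)
        = (2 * (B : ℚ) + (r : ℚ) + 3) * ((2 * B + r + 2).factorial : ℚ) := by
      rw [show 2 * B + r + 3 = (2 * B + r + 2) + 1 from by ring, Nat.factorial_succ]; push_cast; ring
    have hf2 : (((r + 2).factorial : ℕ) : ℚ) = ((r : ℚ) + 2) * ((r : ℚ) + 1) * (r.factorial : ℚ) := by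
      rw [show r + 2 = (r + 1) + 1 from rfl, Nat.factorial_succ, Nat.factorial_succ]; push_cast; ring
    have hf3 : (((r + 1).factorial : ℕ) : ℚ) = ((r : ℚ) + 1) * (r.factorial : ℚ) := by
      rw [Nat.factorial_succ]; push_cast; ring
    have hf4 : (((B + 1).factorial : ℕ) : ℚ) = ((B : ℚ) + 1) * (B.factorial : ℚ) := by
      rw [Nat.factorial_succ]; push_cast; ring
    rw [hf1, hf2, hf3, hf4]
    have hq : q ≠ 0 := ne_of_gt hqpos
    have hB1 : ((B : ℚ) + 1) ≠ 0 := by positivity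
    have hr1 : ((r : ℚ) + 1) ≠ 0 := by positivity
    have hr2 : ((r : ℚ) + 2) ≠ 0 := by positivity
    have hfB : (B.factorial : ℚ) ≠ 0 := Nat.cast_ne_zero.mpr (Nat.factorial_ne_zero _)
    have hfr : (r.factorial : ℚ) ≠ 0 := Nat.cast_ne_zero.mpr (Nat.factorial_ne_zero _)
    have hB0 : (0 : ℚ) ≤ (B : ℚ) := Nat.cast_nonneg B
    have hr0 : (0 : ℚ) ≤ (r : ℚ) := Nat.cast_nonneg r
    have hK : (2 * ((2 * B + r + 3 : ℕ) : ℚ) + (D : ℚ) - 5) ≠ 0 := by push_cast; linarith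
    have hX2 : (2 * ((2 * B + r + 3 : ℕ) : ℚ) + (D : ℚ) - 5) - 2 * ((B : ℚ) + 1) ≠ 0 := by
      push_cast; linarith
    rw [show ((D : ℚ) - 1) + 2 * (((2 * B + r + 3 : ℕ) : ℚ) - 2)
        = 2 * ((2 * B + r + 3 : ℕ) : ℚ) + (D : ℚ) - 5 from by push_cast; ring]
    rw [show (2 * ((2 * B + r + 2 : ℕ) : ℚ) + (D : ℚ) - 5 - 2 * (B : ℚ))
        = (2 * ((2 * B + r + 3 : ℕ) : ℚ) + (D : ℚ) - 5) - 2 * ((B : ℚ) + 1) from by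
      push_cast; ring]
    rw [pow_succ]
    have hkey := key3 (B : ℚ) (r : ℚ) (B.factorial : ℚ) (r.factorial : ℚ)
      ((2 * B + r + 2).factorial : ℚ) q ((-(1 / 2) : ℚ) ^ B)
      (2 * ((2 * B + r + 3 : ℕ) : ℚ) + (D : ℚ) - 5) hq hfB hfr hB1 hr1 hr2 hK hX2
    push_cast at hkey ⊢
    linear_combination hkey
end

section
/- For j ≥ 2 and ω ≥ 3, the Behrends-Fronsdal generating polynomial Θ^{(j)}(u,w,s) := Σ_{A=0}^{⌊j/2⌋} a_A^{(j)} (uw)^A s^{j-2A} (with a_A^{(j)} given by the recurrence a_0=1, a_A = -(1/2)((j-2A+2)(j-2A+1))/(A(2j-2A+ω-2))·a_{A-1}) satisfies the three-variable polynomial identity Θ^{(j)} = s·P + the correction term: explicitly, Σ_A a_A^{(j-1)}(uw)^A s^{j-2A} - (1/(ω+2(j-2)))·Σ_A 2A·a_A^{(j-1)}(uw)^A s^{j-2A} - (1/(ω+2(j-2)))·Σ_A (j-1-2A)·a_A^{(j-1)} (uw)^{A+1} s^{j-2(A+1)} = Σ_A a_A^{(j)}(uw)^A s^{j-2A}. 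-/
/-!
Write `j = n + 1`, `t_A = a_A^{(n+1)}`, `p_A = a_A^{(n)}` and `N = 2n + ω - 2`. Comparing
coefficients of `(uw)^A s^{j-2A}` reduces the identity to
`N t_{A+1} = (N - 2(A+1)) p_{A+1} - (n - 2A) p_A`. Telescoping the two recurrences gives
`N (n + 1 - 2A) t_A = (n + 1) (N - 2A) p_A` and `2(A+1) N t_{A+1} = -(n + 1) (n - 2A) p_A`,
proved together by induction on `A`; their sum is `n + 1` times the required relation.
-/

open Finset

structure IsBFCoeffs (ω : ℕ) (a : ℕ → ℕ → ℚ) : Prop where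
  coeff_zero : ∀ n, a n 0 = 1
  recurrence : ∀ n A : ℕ, 1 ≤ A → A ≤ n / 2 →
    a n A = -(1 / 2) * (((n : ℚ) - 2 * A + 2) * ((n : ℚ) - 2 * A + 1)) /
      ((A : ℚ) * (2 * (n : ℚ) - 2 * A + (ω : ℚ) - 2)) * a n (A - 1)
  eq_zero_of_lt : ∀ n A : ℕ, n / 2 < A → a n A = 0

namespace IsBFCoeffs

variable {ω : ℕ} {a : ℕ → ℕ → ℚ}

theorem mul_coeff_succ_eq (ha : IsBFCoeffs ω a) (hω : 0 < ω) {n A : ℕ} (hA : 2 * (A + 1) ≤ n + 1) :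
    2 * ((A : ℚ) + 1) * (2 * n - 2 * A + ω - 4) * a n (A + 1) =
      -((n - 2 * A) * (n - 2 * A - 1)) * a n A := by
  have hωq : (1 : ℚ) ≤ ω := by exact_mod_cast hω
  rcases (show 2 * (A + 1) ≤ n ∨ 2 * (A + 1) = n + 1 by omega) with hA | hA
  · have hAq : 2 * (A : ℚ) + 2 ≤ n := by exact_mod_cast hA
    have hd : ((A : ℚ) + 1) * (2 * n - 2 * (A + 1) + ω - 2) ≠ 0 := by
      have : (2 * n - 2 * (A + 1) + ω - 2 : ℚ) ≠ 0 := by linarith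
      positivity
    have hrec := ha.recurrence n (A + 1) (by omega) (by omega)
    push_cast at hrec
    rw [div_mul_eq_mul_div, eq_div_iff hd] at hrec
    linear_combination 2 * hrec
  · -- past `n / 2` both sides vanish
    have hAq : 2 * (A : ℚ) + 2 = n + 1 := by exact_mod_cast hA
    rw [ha.eq_zero_of_lt n (A + 1) (by omega), show (n - 2 * A - 1 : ℚ) = 0 by linarith]
    ring

theorem coeff_succ_shift_of_diag (ha : IsBFCoeffs ω a) (hω : 0 < ω) {n A : ℕ}
    (hA : 2 * (A + 1) ≤ n + 1)
    (hdiag : (2 * n + ω - 2 : ℚ) * (n + 1 - 2 * A) * a (n + 1) A =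
      (n + 1) * (2 * n + ω - 2 - 2 * A) * a n A) :
    2 * ((A : ℚ) + 1) * (2 * n + ω - 2) * a (n + 1) (A + 1) = -((n + 1) * (n - 2 * A)) * a n A := by
  have hωq : (1 : ℚ) ≤ ω := by exact_mod_cast hω
  have hAq : 2 * (A : ℚ) + 2 ≤ n + 1 := by exact_mod_cast hA
  have hrec := ha.mul_coeff_succ_eq hω (n := n + 1) (A := A) (by omega)
  push_cast at hrec
  refine mul_left_cancel₀ (show (2 * n - 2 * A + ω - 2 : ℚ) ≠ 0 by linarith) ?_
  linear_combination (2 * n + ω - 2 : ℚ) * hrec - (n - 2 * A : ℚ) * hdiag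

theorem coeff_succ_diag (ha : IsBFCoeffs ω a) (hω : 0 < ω) {n : ℕ} :
    ∀ {A : ℕ}, 2 * A ≤ n + 1 → (2 * n + ω - 2 : ℚ) * (n + 1 - 2 * A) * a (n + 1) A =
      (n + 1) * (2 * n + ω - 2 - 2 * A) * a n A
  | 0, _ => by simp only [ha.coeff_zero]; ring
  | A + 1, hA => by
    have hshift := ha.coeff_succ_shift_of_diag hω hA (ha.coeff_succ_diag hω (by omega))
    have hrec := ha.mul_coeff_succ_eq hω hA
    refine mul_left_cancel₀ (show 2 * ((A : ℚ) + 1) ≠ 0 by positivity) ?_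
    push_cast
    linear_combination (n - 1 - 2 * A : ℚ) * hshift - (n + 1 : ℚ) * hrec

theorem coeff_succ (ha : IsBFCoeffs ω a) (hω : 0 < ω) {n A : ℕ} (hA : 2 * (A + 1) ≤ n + 1) :
    (2 * n + ω - 2 : ℚ) * a (n + 1) (A + 1) =
      (2 * n + ω - 2 - 2 * (A + 1)) * a n (A + 1) - (n - 2 * A) * a n A := by
  have hdiag := ha.coeff_succ_diag hω hA
  have hshift := ha.coeff_succ_shift_of_diag hω hA (ha.coeff_succ_diag hω (by omega))
  refine mul_left_cancel₀ (show (n + 1 : ℚ) ≠ 0 by positivity) ?_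
  push_cast at hdiag
  linear_combination hdiag + hshift

end IsBFCoeffs

theorem sum_range_eq_sum_range_of_eq_zero {M : Type*} [AddCommMonoid M] {f : ℕ → M} {m n : ℕ}
    (hmn : m ≤ n) (hf : ∀ A, m ≤ A → A < n → f A = 0) :
    ∑ A ∈ range m, f A = ∑ A ∈ range n, f A :=
  sum_subset (range_subset_range.2 hmn) fun A hn hm => hf A (by simpa using hm) (by simpa using hn)

theorem sum_sub_sum_sub_shifted_sum_eq {R : Type*} [CommRing R] [Algebra ℚ R] (x s : R)
    (k m : ℕ) (c : ℚ) (f g q t : ℕ → ℚ) (h0 : t 0 = f 0 - c * g 0)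
    (hsucc : ∀ A < m, t (A + 1) = f (A + 1) - c * g (A + 1) - c * q A) :
    (∑ A ∈ range (m + 1), algebraMap ℚ R (f A) * x ^ A * s ^ (k - 2 * A)) -
        algebraMap ℚ R c * (∑ A ∈ range (m + 1), algebraMap ℚ R (g A) * x ^ A * s ^ (k - 2 * A)) -
        algebraMap ℚ R c *
          (∑ A ∈ range m, algebraMap ℚ R (q A) * x ^ (A + 1) * s ^ (k - 2 * (A + 1))) =
      ∑ A ∈ range (m + 1), algebraMap ℚ R (t A) * x ^ A * s ^ (k - 2 * A) := by
  have hT : ∑ A ∈ range m, algebraMap ℚ R (t (A + 1)) * x ^ (A + 1) * s ^ (k - 2 * (A + 1)) =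
      ∑ A ∈ range m, algebraMap ℚ R (f (A + 1)) * x ^ (A + 1) * s ^ (k - 2 * (A + 1)) -
        algebraMap ℚ R c *
          ∑ A ∈ range m, algebraMap ℚ R (g (A + 1)) * x ^ (A + 1) * s ^ (k - 2 * (A + 1)) -
        algebraMap ℚ R c *
          ∑ A ∈ range m, algebraMap ℚ R (q A) * x ^ (A + 1) * s ^ (k - 2 * (A + 1)) := by
    rw [sum_congr rfl fun A hA => by rw [hsucc A (mem_range.1 hA)]]
    simp only [map_sub, map_mul, sub_mul, sum_sub_distrib, mul_sum, mul_assoc]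
  rw [sum_range_succ', sum_range_succ', sum_range_succ', hT, h0, map_sub, map_mul]
  ring

/-- The three-variable polynomial identity behind the Behrends–Fronsdal recursion:
`Σ_A a_A^{(j-1)} (uw)^A s^{j-2A} - (1/(ω+2(j-2))) Σ_A 2A a_A^{(j-1)} (uw)^A s^{j-2A}
 - (1/(ω+2(j-2))) Σ_A (j-1-2A) a_A^{(j-1)} (uw)^{A+1} s^{j-2(A+1)}
 = Σ_A a_A^{(j)} (uw)^A s^{j-2A}`,
where the coefficients `a_A^{(n)} ∈ ℚ` satisfy `a_0^{(n)} = 1`, the recurrence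
`a_A^{(n)} = -(1/2)((n-2A+2)(n-2A+1))/(A(2n-2A+ω-2)) a_{A-1}^{(n)}` for
`1 ≤ A ≤ ⌊n/2⌋`, and vanish otherwise. -/
theorem BF_polynomial_identity {R : Type*} [CommRing R] [Algebra ℚ R]
    (u w s : R) (j ω : ℕ) (hj : 2 ≤ j) (hω : 3 ≤ ω) (a : ℕ → ℕ → ℚ)
    (h0 : ∀ n, a n 0 = 1)
    (hrec : ∀ n A : ℕ, 1 ≤ A → A ≤ n / 2 →
      a n A = -(1 / 2) * (((n : ℚ) - 2 * A + 2) * ((n : ℚ) - 2 * A + 1)) /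
        ((A : ℚ) * (2 * (n : ℚ) - 2 * A + (ω : ℚ) - 2)) * a n (A - 1))
    (hzero : ∀ n A : ℕ, n / 2 < A → a n A = 0) :
    (∑ A ∈ range ((j - 1) / 2 + 1),
        algebraMap ℚ R (a (j - 1) A) * (u * w) ^ A * s ^ (j - 2 * A)) -
      algebraMap ℚ R (1 / ((ω : ℚ) + 2 * ((j : ℚ) - 2))) *
        (∑ A ∈ range ((j - 1) / 2 + 1),
          algebraMap ℚ R (2 * (A : ℚ) * a (j - 1) A) * (u * w) ^ A * s ^ (j - 2 * A)) -
      algebraMap ℚ R (1 / ((ω : ℚ) + 2 * ((j : ℚ) - 2))) *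
        (∑ A ∈ range ((j - 1) / 2 + 1),
          algebraMap ℚ R (((j : ℚ) - 1 - 2 * A) * a (j - 1) A) *
            (u * w) ^ (A + 1) * s ^ (j - 2 * (A + 1))) =
    ∑ A ∈ range (j / 2 + 1),
      algebraMap ℚ R (a j A) * (u * w) ^ A * s ^ (j - 2 * A) := by
  obtain ⟨n, rfl⟩ : ∃ n, j = n + 1 := ⟨j - 1, by omega⟩
  have ha : IsBFCoeffs ω a := ⟨h0, hrec, hzero⟩
  simp only [Nat.add_sub_cancel]
  rw [sum_range_eq_sum_range_of_eq_zero (show n / 2 + 1 ≤ (n + 1) / 2 + 1 by omega) ?vanish₁,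
    sum_range_eq_sum_range_of_eq_zero (show n / 2 + 1 ≤ (n + 1) / 2 + 1 by omega) ?vanish₂,
    ← sum_range_eq_sum_range_of_eq_zero (show (n + 1) / 2 ≤ n / 2 + 1 by omega) ?vanish₃]
  case vanish₁ | vanish₂ =>
    intro A hA _
    simp [ha.eq_zero_of_lt n A (by omega)]
  case vanish₃ =>
    intro A hA hA'
    have hnA : (n : ℚ) = 2 * A := by exact_mod_cast (show n = 2 * A by omega)
    simp [hnA]
  apply sum_sub_sum_sub_shifted_sum_eq
  · simp [h0]
  · intro A hA
    have hN : (ω + 2 * ((n + 1 : ℕ) - 2) : ℚ) ≠ 0 := by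
      have : (1 : ℚ) ≤ n := by exact_mod_cast (show 1 ≤ n by omega)
      have : (3 : ℚ) ≤ ω := by exact_mod_cast hω
      push_cast; linarith
    have := ha.coeff_succ (by omega) (show 2 * (A + 1) ≤ n + 1 by omega)
    field_simp
    push_cast at hN ⊢
    linear_combination this
end
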